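/- arXiv:1907.12967 — 5 statements merged into one kernel-verified Lean document; each statement's English description precedes it below -/
import Mathlib

section
/- Let x and y be n×n complex matrices with x* y = 0 and x y* = 0. Then for every real p ≥ 1, the Schatten p-norm satisfies ‖x + y‖_p^p = ‖x‖_p^p + ‖y‖_p^p. -/
/-!
Orthogonality gives `(x + y)ᴴ (x + y) = xᴴ x + yᴴ y` with `xᴴ x` and `yᴴ y` annihilating each
other on both sides. For such a pair `a`, `b`, powers split as `(a + b) ^ (k + 1) = a ^ (k + 1) +
b ^ (k + 1)`; interpolating `f` on the finite set `{0} ∪ σ(a + b) ∪ σ(a) ∪ σ(b)` by a polynomial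
without constant term then gives `f (a + b) = f a + f b` whenever `f 0 = 0`. Taking traces with
`f t = t ^ (p / 2)` gives the additivity of `‖·‖_p ^ p`.
-/

open ComplexOrder

/-- The Schatten `p`-norm of a complex matrix, computed via the eigenvalues of `xᴴ x`
(the `p/2`-powers of which are the `p`-th powers of the singular values of `x`). -/
noncomputable def schattenNorm {n : ℕ} (p : ℝ) (x : Matrix (Fin n) (Fin n) ℂ) : ℝ :=
  (∑ i, ((Matrix.posSemidef_conjTranspose_mul_self x).1.eigenvalues i) ^ (p / 2)) ^ (1 / p)

section StarRing

variable {R : Type*} [NonUnitalSemiring R] [StarRing R] {a b : R}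

theorem star_add_mul_add_of_star_mul_eq_zero (h : star a * b = 0) :
    star (a + b) * (a + b) = star a * a + star b * b := by
  have h' : star b * a = 0 := by simpa using congrArg star h
  rw [star_add, add_mul, mul_add, mul_add, h, h', add_zero, zero_add]

theorem star_mul_self_mul_star_mul_self_eq_zero (h : a * star b = 0) :
    star a * a * (star b * b) = 0 := by
  rw [mul_assoc, ← mul_assoc a, h, zero_mul, mul_zero]

end StarRing

theorem add_pow_succ_of_mul_eq_zero {R : Type*} [Semiring R] {a b : R}
    (hab : a * b = 0) (hba : b * a = 0) (k : ℕ) :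
    (a + b) ^ (k + 1) = a ^ (k + 1) + b ^ (k + 1) := by
  induction k with
  | zero => simp
  | succ k ih =>
    have hab' : a ^ (k + 1) * b = 0 := by rw [pow_succ, mul_assoc, hab, mul_zero]
    have hba' : b ^ (k + 1) * a = 0 := by rw [pow_succ, mul_assoc, hba, mul_zero]
    rw [pow_succ, ih, add_mul, mul_add, mul_add, hab', hba', zero_add, add_zero,
      ← pow_succ, ← pow_succ]

theorem Polynomial.aeval_add_of_mul_eq_zero {R A : Type*} [CommSemiring R] [Semiring A]
    [Algebra R A] {a b : A} (hab : a * b = 0) (hba : b * a = 0) {q : Polynomial R}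
    (hq : q.coeff 0 = 0) : aeval (a + b) q = aeval a q + aeval b q := by
  simp only [aeval_eq_sum_range, ← Finset.sum_add_distrib]
  refine Finset.sum_congr rfl fun i _ => ?_
  cases i with
  | zero => simp [hq]
  | succ k => rw [add_pow_succ_of_mul_eq_zero hab hba, smul_add]

namespace Matrix.IsHermitian

variable {𝕜 ι : Type*} [RCLike 𝕜] [Fintype ι] [DecidableEq ι] {A B : Matrix ι ι 𝕜}

theorem trace_cfc (hA : A.IsHermitian) (f : ℝ → ℝ) :
    (cfc f A).trace = ∑ i, (f (hA.eigenvalues i) : 𝕜) := by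
  rw [hA.cfc_eq, IsHermitian.cfc, Unitary.conjStarAlgAut_apply, trace_mul_comm, ← mul_assoc,
    Unitary.coe_star_mul_self, one_mul, trace_diagonal]
  rfl

theorem cfc_add_of_mul_eq_zero (hA : A.IsHermitian) (hB : B.IsHermitian)
    (hAB : A * B = 0) (hBA : B * A = 0) {f : ℝ → ℝ} (hf : f 0 = 0) :
    cfc f (A + B) = cfc f A + cfc f B := by
  let S : Set ℝ := insert 0 (spectrum ℝ (A + B) ∪ spectrum ℝ A ∪ spectrum ℝ B)
  have hS : S.Finite :=
    ((finite_real_spectrum.union finite_real_spectrum).union finite_real_spectrum).insert 0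
  let q : Polynomial ℝ := Lagrange.interpolate hS.toFinset id f
  have hq : ∀ t ∈ S, q.eval t = f t := fun t ht =>
    Lagrange.eval_interpolate_at_node f Function.injective_id.injOn (hS.mem_toFinset.2 ht)
  have hcfc : ∀ M : Matrix ι ι 𝕜, M.IsHermitian → spectrum ℝ M ⊆ S →
      cfc f M = Polynomial.aeval M q := fun M hM hMS => by
    rw [← cfc_polynomial q M hM.isSelfAdjoint]
    exact cfc_congr fun t ht => (hq t (hMS ht)).symm
  have hq0 : q.coeff 0 = 0 := by
    rw [Polynomial.coeff_zero_eq_eval_zero, hq 0 (Set.mem_insert 0 _), hf]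
  rw [hcfc _ (hA.add hB) fun t ht => .inr (.inl (.inl ht)),
    hcfc _ hA fun t ht => .inr (.inl (.inr ht)), hcfc _ hB fun t ht => .inr (.inr ht),
    Polynomial.aeval_add_of_mul_eq_zero hAB hBA hq0]

end Matrix.IsHermitian

theorem schattenNorm_rpow_self {n : ℕ} {p : ℝ} (hp : p ≠ 0) (x : Matrix (Fin n) (Fin n) ℂ) :
    schattenNorm p x ^ p =
      ∑ i, ((Matrix.posSemidef_conjTranspose_mul_self x).1.eigenvalues i) ^ (p / 2) := by
  rw [schattenNorm, ← Real.rpow_mul, one_div_mul_cancel hp, Real.rpow_one]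
  exact Finset.sum_nonneg fun i _ =>
    Real.rpow_nonneg ((Matrix.posSemidef_conjTranspose_mul_self x).eigenvalues_nonneg i) _

/-- If `xᴴ y = 0` and `x yᴴ = 0`, then `‖x + y‖_p ^ p = ‖x‖_p ^ p + ‖y‖_p ^ p` for every
Schatten `p`-norm with `p ≥ 1`. -/
theorem schattenNorm_add_pow_of_orthogonal {n : ℕ} (x y : Matrix (Fin n) (Fin n) ℂ)
    (h1 : x.conjTranspose * y = 0) (h2 : x * y.conjTranspose = 0)
    (p : ℝ) (hp : 1 ≤ p) :
    schattenNorm p (x + y) ^ p = schattenNorm p x ^ p + schattenNorm p y ^ p := by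
  have hp0 : 0 < p := by linarith
  have hx := (Matrix.posSemidef_conjTranspose_mul_self x).1
  have hy := (Matrix.posSemidef_conjTranspose_mul_self y).1
  have hsum : (x + y).conjTranspose * (x + y) =
      x.conjTranspose * x + y.conjTranspose * y := star_add_mul_add_of_star_mul_eq_zero h1
  have h2' : y * x.conjTranspose = 0 := by simpa using congrArg Matrix.conjTranspose h2
  have hxy : x.conjTranspose * x * (y.conjTranspose * y) = 0 :=
    star_mul_self_mul_star_mul_self_eq_zero h2
  have hyx : y.conjTranspose * y * (x.conjTranspose * x) = 0 :=
    star_mul_self_mul_star_mul_self_eq_zero h2'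
  have hcfc := congrArg Matrix.trace <|
    hx.cfc_add_of_mul_eq_zero hy hxy hyx (f := (· ^ (p / 2))) (Real.zero_rpow (by positivity))
  rw [← hsum, Matrix.trace_add, (Matrix.posSemidef_conjTranspose_mul_self (x + y)).1.trace_cfc,
    hx.trace_cfc, hy.trace_cfc] at hcfc
  rw [schattenNorm_rpow_self hp0.ne', schattenNorm_rpow_self hp0.ne',
    schattenNorm_rpow_self hp0.ne']
  exact_mod_cast hcfc
end

section
/- Let r = [[1, 1], [0, −1]] ∈ M_2(ℂ) and T(x) = r x r*. Let e = [[1,0],[0,0]] and f = [[0,0],[0,1]]. Then e and f are orthogonal projections with e f = 0, but (T e)(T f) ≠ 0. Hence T is not a Lamperti map. -/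
open ComplexOrder

/-- For `r = [[1,1],[0,-1]]` and `T x = r x r*`, the orthogonal projections
`e = [[1,0],[0,0]]` and `f = [[0,0],[0,1]]` satisfy `e f = 0` but `(T e)(T f) ≠ 0`,
so `T` is not Lamperti. -/
theorem conj_by_r_not_lamperti
    (r e f : Matrix (Fin 2) (Fin 2) ℂ)
    (hr : r = !![1, 1; 0, -1]) (he : e = !![1, 0; 0, 0]) (hf : f = !![0, 0; 0, 1]) :
    IsIdempotentElem e ∧ e.IsHermitian ∧ IsIdempotentElem f ∧ f.IsHermitian ∧
    e * f = 0 ∧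
    (r * e * r.conjTranspose) * (r * f * r.conjTranspose) ≠ 0 := by
  subst hr he hf
  refine ⟨?_, ?_, ?_, ?_, ?_, ?_⟩
  · show _ * _ = _
    ext i j; fin_cases i <;> fin_cases j <;>
      simp [Matrix.mul_apply, Fin.sum_univ_two]
  · ext i j; fin_cases i <;> fin_cases j <;> simp [Matrix.conjTranspose_apply]
  · show _ * _ = _
    ext i j; fin_cases i <;> fin_cases j <;>
      simp [Matrix.mul_apply, Fin.sum_univ_two]
  · ext i j; fin_cases i <;> fin_cases j <;> simp [Matrix.conjTranspose_apply]
  · ext i j; fin_cases i <;> fin_cases j <;>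
      simp [Matrix.mul_apply, Fin.sum_univ_two]
  · intro h
    have := congrFun (congrFun h 0) 0
    simp [Matrix.mul_apply, Fin.sum_univ_two, Matrix.conjTranspose_apply, Matrix.vecMul, dotProduct, Fin.sum_univ_two] at this
end

section
/- Let r = [[1, 1], [0, −1]] ∈ M_2(ℂ), T(x) = r x r*, and f = [[0,0],[0,1]]. Then T(f) = [[1,−1],[−1,1]], and for every p with 1 ≤ p < ∞ the Schatten p-norm satisfies ‖T(f)‖_p = 2 while ‖f‖_p = 1. In particular T is not a contraction on the Schatten p-class S_p^2 for any p. -/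
open ComplexOrder

/-!
For a singular `2 × 2` matrix `x` the eigenvalues of `xᴴ x` have product `det (xᴴ x) = 0`, so
they are `0` and `trace (xᴴ x) = ‖x‖₂²`. Every Schatten norm of `x` is therefore its Frobenius norm, which is `2`
for `T f = [[1,-1],[-1,1]]` and `1` for `f`.
-/

lemma Real.rpow_add_rpow_of_mul_eq_zero {a b q : ℝ} (hq : q ≠ 0) (hab : a * b = 0) :
    a ^ q + b ^ q = (a + b) ^ q := by
  rcases mul_eq_zero.mp hab with rfl | rfl <;> simp [Real.zero_rpow hq]

lemma Matrix.IsHermitian.eigenvalues_fin_two_mul_eq_zero {A : Matrix (Fin 2) (Fin 2) ℂ}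
    (hA : A.IsHermitian) (hdet : A.det = 0) : hA.eigenvalues 0 * hA.eigenvalues 1 = 0 := by
  have h := hA.det_eq_prod_eigenvalues
  rw [hdet, Fin.prod_univ_two] at h
  exact RCLike.ofReal_eq_zero.mp (by exact_mod_cast h.symm)

lemma Matrix.IsHermitian.eigenvalues_fin_two_add {A : Matrix (Fin 2) (Fin 2) ℂ}
    (hA : A.IsHermitian) : hA.eigenvalues 0 + hA.eigenvalues 1 = A.trace.re := by
  rw [hA.trace_eq_sum_eigenvalues, Fin.sum_univ_two]
  norm_cast

lemma schattenNorm_fin_two_of_det_eq_zero {x : Matrix (Fin 2) (Fin 2) ℂ} (hx : x.det = 0)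
    {p : ℝ} (hp : p ≠ 0) : schattenNorm p x = √(x.conjTranspose * x).trace.re := by
  have hpsd := Matrix.posSemidef_conjTranspose_mul_self x
  have hdet : (x.conjTranspose * x).det = 0 := by simp [Matrix.det_mul, hx]
  have htr : 0 ≤ (x.conjTranspose * x).trace.re := by
    rw [← hpsd.1.eigenvalues_fin_two_add]
    exact add_nonneg (hpsd.eigenvalues_nonneg 0) (hpsd.eigenvalues_nonneg 1)
  rw [schattenNorm, Fin.sum_univ_two,
    Real.rpow_add_rpow_of_mul_eq_zero (by positivity)
      (hpsd.1.eigenvalues_fin_two_mul_eq_zero hdet),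
    hpsd.1.eigenvalues_fin_two_add, ← Real.rpow_mul htr, Real.sqrt_eq_rpow]
  field_simp

/-- For `r = [[1,1],[0,-1]]`, `T x = r x r*` and `f = [[0,0],[0,1]]` one has
`T f = [[1,-1],[-1,1]]`, `‖T f‖_p = 2` and `‖f‖_p = 1` for all `1 ≤ p < ∞`;
in particular `T` is not a contraction on any Schatten `p`-class. -/
theorem conj_by_r_not_contraction
    (r f : Matrix (Fin 2) (Fin 2) ℂ)
    (hr : r = !![1, 1; 0, -1]) (hf : f = !![0, 0; 0, 1]) :
    r * f * r.conjTranspose = !![1, -1; -1, 1] ∧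
    ∀ p : ℝ, 1 ≤ p →
      schattenNorm p (r * f * r.conjTranspose) = 2 ∧ schattenNorm p f = 1 := by
  subst hr hf
  have hTf : (!![1, 1; 0, -1] : Matrix (Fin 2) (Fin 2) ℂ) * !![0, 0; 0, 1] *
      (!![1, 1; 0, -1] : Matrix (Fin 2) (Fin 2) ℂ).conjTranspose = !![1, -1; -1, 1] := by
    ext i j
    fin_cases i <;> fin_cases j <;> simp [Matrix.mul_apply, Matrix.conjTranspose_apply]
  refine ⟨hTf, fun p hp => ?_⟩
  have hp0 : p ≠ 0 := by positivity
  rw [hTf, schattenNorm_fin_two_of_det_eq_zero (by simp [Matrix.det_fin_two]) hp0,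
    schattenNorm_fin_two_of_det_eq_zero (by simp [Matrix.det_fin_two]) hp0]
  constructor
  · have htr : (!![1, -1; -1, 1].conjTranspose * !![1, -1; -1, 1] :
        Matrix (Fin 2) (Fin 2) ℂ).trace.re = 2 ^ 2 := by
      norm_num [Matrix.trace_fin_two, Matrix.mul_apply, Matrix.conjTranspose_apply]
    rw [htr, Real.sqrt_sq zero_le_two]
  · simp [Matrix.trace_fin_two, Matrix.mul_apply, Matrix.conjTranspose_apply]
end

section
/- Let X be a normed space, p ∈ [1, ∞), and let T, S : X → X be linear maps such that ‖T x‖^p + ‖S x‖^p = ‖x‖^p for all x ∈ X. Define U on the ℓ^p-direct sum ℓ^p(ℕ, X) by U(x_0, x_1, x_2, …) = (T x_0, S x_0, x_1, x_2, …). Then U is a linear isometry of ℓ^p(ℕ, X). -/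
/-- If `‖T x‖^p + ‖S x‖^p = ‖x‖^p` for all `x`, then the shift-type map
`U (x₀, x₁, x₂, …) = (T x₀, S x₀, x₁, x₂, …)` on `ℓ^p(ℕ, X)` is a linear isometry. -/
theorem dilation_shift_isometry {X : Type*} [NormedAddCommGroup X] [NormedSpace ℝ X]
    (p : ENNReal) (hp1 : 1 ≤ p) (hptop : p ≠ ⊤)
    (T S : X →ₗ[ℝ] X)
    (hTS : ∀ x : X, ‖T x‖ ^ p.toReal + ‖S x‖ ^ p.toReal = ‖x‖ ^ p.toReal)
    (U : lp (fun _ : ℕ => X) p →ₗ[ℝ] lp (fun _ : ℕ => X) p)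
    (hU : ∀ x : lp (fun _ : ℕ => X) p,
      (U x : ∀ _ : ℕ, X) 0 = T (x 0) ∧
      (U x : ∀ _ : ℕ, X) 1 = S (x 0) ∧
      ∀ n : ℕ, (U x : ∀ _ : ℕ, X) (n + 2) = x (n + 1)) :
    ∀ x : lp (fun _ : ℕ => X) p, ‖U x‖ = ‖x‖ := by
  haveI : Fact (1 ≤ p) := ⟨hp1⟩
  have hp : 0 < p.toReal := ENNReal.toReal_pos (by positivity) hptop
  · intro x
    obtain ⟨h0, h1, h2⟩ := hU x
    have hsumU : Summable (fun n : ℕ => ‖(U x : ∀ _ : ℕ, X) n‖ ^ p.toReal) :=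
      (lp.memℓp (U x)).summable hp
    have hsumx : Summable (fun n : ℕ => ‖(x : ∀ _ : ℕ, X) n‖ ^ p.toReal) :=
      (lp.memℓp x).summable hp
    have key : (∑' n : ℕ, ‖(U x : ∀ _ : ℕ, X) n‖ ^ p.toReal)
        = ∑' n : ℕ, ‖(x : ∀ _ : ℕ, X) n‖ ^ p.toReal := by
      rw [Summable.tsum_eq_zero_add hsumU, Summable.tsum_eq_zero_add ((summable_nat_add_iff 1).2 hsumU),
        Summable.tsum_eq_zero_add hsumx]
      simp only [h0, h1]
      have : ∀ n : ℕ, ‖(U x : ∀ _ : ℕ, X) (n + 1 + 1)‖ ^ p.toReal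
          = ‖(x : ∀ _ : ℕ, X) (n + 1)‖ ^ p.toReal := fun n => by rw [h2 n]
      rw [tsum_congr this]
      rw [← add_assoc, hTS]
    rw [← lp.norm_rpow_eq_tsum hp, ← lp.norm_rpow_eq_tsum hp] at key
    exact Real.rpow_left_injOn hp.ne' (norm_nonneg (U x)) (norm_nonneg x) (by simpa using key)
end

section
/- Fix an integer k ≥ 1 and a real p ≥ 1. Let a_i = e_{ii} and b_i = k^{−1/(2p)} e_{1i} in M_k(ℂ) for 1 ≤ i ≤ k, where e_{ij} are the matrix units. Define T_1(x) = Σ_i a_i* x b_i, T_2(x) = Σ_i b_i* x a_i, T_3(x) = Σ_i a_i* x a_i, T_4(x) = Σ_i b_i* x b_i, and T = (T_1 + T_2 + T_3 + T_4)/4. Then for every positive semidefinite x ∈ M_k(ℂ), the matrix T(x) is diagonal: (T(x))_{ij} = 0 whenever i ≠ j. -/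
/-!
Every `aᵢ` and `bᵢ` is a matrix unit (up to a scalar) supported in column `i`, and
`(e_{r l})ᴴ x e_{s l} = x_{r s} e_{l l}`. So each of the four sums defining `T x` is a sum of
diagonal matrix units, whatever `x` is.
-/

open ComplexOrder

namespace Matrix

variable {n R : Type*} [DecidableEq n]

theorem isDiag_single_same [Zero R] (l : n) (a : R) : (single l l a).IsDiag := by
  simpa only [diagonal_single] using isDiag_diagonal (Pi.single l a)

theorem isDiag_conjTranspose_single_mul_mul_single [Fintype n] [Semiring R] [StarRing R]
    (r s l : n) (α β : R) (x : Matrix n n R) :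
    ((single r l α)ᴴ * x * single s l β).IsDiag := by
  rw [conjTranspose_single, single_mul_mul_single]
  exact isDiag_single_same l _

theorem isDiag_sum_conjTranspose_single_mul_mul_single [Fintype n] [Semiring R] [StarRing R]
    (r s : n → n) (α β : n → R) (x : Matrix n n R) :
    (∑ l, (single (r l) l (α l))ᴴ * x * single (s l) l (β l)).IsDiag :=
  Finset.sum_induction _ IsDiag (fun _ _ => IsDiag.add) isDiag_zero
    fun l _ => isDiag_conjTranspose_single_mul_mul_single (r l) (s l) l (α l) (β l) x

end Matrix

theorem jungeLeMerdy_range_diagonal_general (k : ℕ) (hk : 1 ≤ k) (p : ℝ)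
    (a b : Fin k → Matrix (Fin k) (Fin k) ℂ)
    (ha : a = fun i => Matrix.single i i 1)
    (hb : b = fun i => (((k : ℝ) ^ (-(1 / (2 * p))) : ℝ) : ℂ) •
      Matrix.single (⟨0, hk⟩ : Fin k) i 1)
    (T : Matrix (Fin k) (Fin k) ℂ → Matrix (Fin k) (Fin k) ℂ)
    (hT : T = fun x => (4 : ℂ)⁻¹ •
      ((∑ i, (a i).conjTranspose * x * b i) + (∑ i, (b i).conjTranspose * x * a i) +
       (∑ i, (a i).conjTranspose * x * a i) + (∑ i, (b i).conjTranspose * x * b i))) :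
    ∀ x : Matrix (Fin k) (Fin k) ℂ, x.PosSemidef →
      ∀ i j : Fin k, i ≠ j → T x i j = 0 := by
  simp only [Matrix.smul_single, smul_eq_mul, mul_one] at hb
  subst ha hb hT
  intro x _
  refine Matrix.IsDiag.smul _ (.add (.add (.add ?_ ?_) ?_) ?_) <;>
    exact Matrix.isDiag_sum_conjTranspose_single_mul_mul_single _ _ _ _ x

/-- The Junge–Le Merdy operator `T = (T₁ + T₂ + T₃ + T₄)/4` built from `aᵢ = eᵢᵢ` and
`bᵢ = k^{-1/(2p)} e₁ᵢ` maps positive semidefinite matrices to diagonal matrices. -/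
theorem jungeLeMerdy_range_diagonal (k : ℕ) (hk : 1 ≤ k) (p : ℝ) (hp : 1 ≤ p)
    (a b : Fin k → Matrix (Fin k) (Fin k) ℂ)
    (ha : a = fun i => Matrix.single i i 1)
    (hb : b = fun i => (((k : ℝ) ^ (-(1 / (2 * p))) : ℝ) : ℂ) •
      Matrix.single (⟨0, hk⟩ : Fin k) i 1)
    (T : Matrix (Fin k) (Fin k) ℂ → Matrix (Fin k) (Fin k) ℂ)
    (hT : T = fun x => (4 : ℂ)⁻¹ •
      ((∑ i, (a i).conjTranspose * x * b i) + (∑ i, (b i).conjTranspose * x * a i) +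
       (∑ i, (a i).conjTranspose * x * a i) + (∑ i, (b i).conjTranspose * x * b i))) :
    ∀ x : Matrix (Fin k) (Fin k) ℂ, x.PosSemidef →
      ∀ i j : Fin k, i ≠ j → T x i j = 0 :=
  jungeLeMerdy_range_diagonal_general k hk p a b ha hb T hT
end
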